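/- arXiv:math/0608669 — 4 statements merged into one kernel-verified Lean document; each statement's English description precedes it below -/
import Mathlib

section
/- Let λ ∈ ℂ. Let f₀, f₁, f₂ be tempered distributions on ℝ such that: f₀ is homogeneous of degree λ and f₀ ≠ 0; for every a > 0 and every Schwartz function φ one has ⟨f₁, φ(·/a)⟩ = a^{λ+1}⟨f₁, φ⟩ + a^{λ+1}(log a)⟨f₀, φ⟩ (i.e., f₁ is an associated homogeneous distribution of degree λ and order 1 with component f₀); and suppose H : (0,∞) → ℂ is a function such that for every a > 0 and every Schwartz φ, ⟨f₂, φ(·/a)⟩ = a^{λ+1}⟨f₂, φ⟩ + H(a)⟨f₁, φ⟩. Then H(a) = 0 for all a > 0; in particular f₂ is homogeneous of degree λ. (Hence there exist no associated homogeneous distributions of order k ≥ 2 in the Gel'fand–Shilov sense.) -/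
/-!
Write `H a = a^(λ+1) g a`. Computing `⟨f₂, φ(·/(ab))⟩` once directly and once as the dilate by `b`
of the dilate by `a` yields `(g (ab) - g a - g b) ⟨f₁, φ⟩ = g b (log a) ⟨f₀, φ⟩`. The left side is
symmetric in `a, b`, so testing against `φ` with `⟨f₀, φ⟩ ≠ 0` gives `g b log a = g a log b`, i.e.
`g = g e · log` is additive; the left side then vanishes, and `a = e` forces `g b = 0`.
-/

open MeasureTheory SchwartzMap Complex Finset

noncomputable section

variable {E : Type*} [NormedAddCommGroup E] [NormedSpace ℝ E]

/-- The dilation operator on Schwartz functions: for `a ≠ 0`,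
`dilate a φ = fun x => φ (a⁻¹ • x)`, i.e. `x ↦ φ (x / a)` (junk value `0` for `a = 0`). -/
def dilate (a : ℝ) : 𝓢(E, ℂ) →L[ℝ] 𝓢(E, ℂ) :=
  if h : a = 0 then 0 else
    SchwartzMap.compCLM ℝ (g := fun x : E => a⁻¹ • x)
      (by convert (a⁻¹ • ContinuousLinearMap.id ℝ E).hasTemperateGrowth using 1 <;> ext x <;> simp)
      ⟨1, |a|, fun x => by
        have ha : a ≠ 0 := h
        have h0 : |a| ≠ 0 := abs_ne_zero.mpr ha
        have hx : ‖a⁻¹ • x‖ = |a|⁻¹ * ‖x‖ := by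
          rw [norm_smul, norm_inv, Real.norm_eq_abs]
        have key : |a| * (1 + ‖a⁻¹ • x‖) ^ 1 = |a| + ‖x‖ := by
          rw [pow_one, hx, mul_add, mul_one, ← mul_assoc, mul_inv_cancel₀ h0, one_mul]
        calc ‖x‖ ≤ |a| + ‖x‖ := le_add_of_nonneg_left (abs_nonneg a)
          _ = |a| * (1 + ‖a⁻¹ • x‖) ^ 1 := key.symm⟩

lemma dilate_apply (a : ℝ) (ha : a ≠ 0) (φ : 𝓢(E, ℂ)) (x : E) :
    dilate a φ x = φ (a⁻¹ • x) := by
  simp [dilate, dif_neg ha]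

/-- On `ℝ`, `dilate a φ` is the function `x ↦ φ (x / a)`. -/
lemma dilate_apply_real (a : ℝ) (ha : a ≠ 0) (φ : 𝓢(ℝ, ℂ)) (x : ℝ) :
    dilate a φ x = φ (x / a) := by
  rw [dilate_apply a ha, smul_eq_mul, inv_mul_eq_div]

/-- A tempered distribution on `ℝ` is homogeneous of degree `λ` if
`⟨f, φ(·/a)⟩ = a^(λ+1) ⟨f, φ⟩` for all `a > 0` and all Schwartz `φ`. -/
def IsHomogeneous (lam : ℂ) (f : 𝓢(ℝ, ℂ) →L[ℂ] ℂ) : Prop :=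
  ∀ a : ℝ, 0 < a → ∀ φ : 𝓢(ℝ, ℂ), f (dilate a φ) = (a : ℂ) ^ (lam + 1) * f φ

lemma dilate_dilate {a b : ℝ} (ha : a ≠ 0) (hb : b ≠ 0) (φ : 𝓢(ℝ, ℂ)) :
    dilate b (dilate a φ) = dilate (a * b) φ := by
  ext x
  rw [dilate_apply_real b hb, dilate_apply_real a ha,
    dilate_apply_real (a * b) (mul_ne_zero ha hb), div_div, mul_comm b a]

lemma eq_zero_of_sub_mul_eq_mul_log {g : ℝ → ℂ} {u v : ℂ} (hv : v ≠ 0)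
    (h : ∀ a b : ℝ, 0 < a → 0 < b → (g (a * b) - g a - g b) * u = g b * Real.log a * v) :
    ∀ a : ℝ, 0 < a → g a = 0 := by
  have he : 0 < Real.exp 1 := Real.exp_pos 1
  have hsymm : ∀ a b : ℝ, 0 < a → 0 < b → g b * Real.log a = g a * Real.log b := by
    intro a b ha hb
    have hab := h a b ha hb
    have hba := h b a hb ha
    rw [mul_comm b a] at hba
    exact mul_right_cancel₀ hv (by linear_combination hba - hab)
  have hlog : ∀ b : ℝ, 0 < b → g b = g (Real.exp 1) * Real.log b := by
    intro b hb
    simpa using hsymm (Real.exp 1) b he hb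
  intro b hb
  have hadd : g (Real.exp 1 * b) - g (Real.exp 1) - g b = 0 := by
    rw [hlog _ (mul_pos he hb), hlog _ he, hlog _ hb, Real.log_mul he.ne' hb.ne', Real.log_exp]
    push_cast
    ring
  have heb := h (Real.exp 1) b he hb
  rw [hadd, Real.log_exp] at heb
  simpa [hv] using heb

lemma ofReal_cpow_ne_zero {a : ℝ} (ha : 0 < a) (s : ℂ) : (a : ℂ) ^ s ≠ 0 :=
  Complex.cpow_ne_zero_iff.2 (Or.inl (Complex.ofReal_ne_zero.2 ha.ne'))

lemma sub_mul_eq_mul_log_of_dilate {lam : ℂ} {f₀ f₁ f₂ : 𝓢(ℝ, ℂ) →L[ℂ] ℂ} {H : ℝ → ℂ}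
    (hf₁ : ∀ a : ℝ, 0 < a → ∀ φ : 𝓢(ℝ, ℂ),
      f₁ (dilate a φ) = (a : ℂ) ^ (lam + 1) * f₁ φ
        + (a : ℂ) ^ (lam + 1) * (Real.log a : ℂ) * f₀ φ)
    (hf₂ : ∀ a : ℝ, 0 < a → ∀ φ : 𝓢(ℝ, ℂ),
      f₂ (dilate a φ) = (a : ℂ) ^ (lam + 1) * f₂ φ + H a * f₁ φ)
    {a b : ℝ} (ha : 0 < a) (hb : 0 < b) (φ : 𝓢(ℝ, ℂ)) :
    let g : ℝ → ℂ := fun x ↦ H x / (x : ℂ) ^ (lam + 1)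
    (g (a * b) - g a - g b) * f₁ φ = g b * Real.log a * f₀ φ := by
  intro g
  have hca := ofReal_cpow_ne_zero ha (lam + 1)
  have hcb := ofReal_cpow_ne_zero hb (lam + 1)
  have hcab : ((a * b : ℝ) : ℂ) ^ (lam + 1) = (a : ℂ) ^ (lam + 1) * (b : ℂ) ^ (lam + 1) := by
    push_cast
    exact Complex.mul_cpow_ofReal_nonneg ha.le hb.le _
  have hdirect := hf₂ (a * b) (mul_pos ha hb) φ
  have htwice := hf₂ b hb (dilate a φ)
  rw [dilate_dilate ha.ne' hb.ne'] at htwice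
  simp only [g, hcab]
  field_simp
  linear_combination htwice - hdirect + (b : ℂ) ^ (lam + 1) * hf₂ a ha φ + H b * hf₁ a ha φ
    - f₂ φ * hcab

theorem stmt_0_general (lam : ℂ) (f₀ f₁ f₂ : 𝓢(ℝ, ℂ) →L[ℂ] ℂ)
    (hf₀ne : f₀ ≠ 0)
    (hf₁ : ∀ a : ℝ, 0 < a → ∀ φ : 𝓢(ℝ, ℂ),
      f₁ (dilate a φ) = (a : ℂ) ^ (lam + 1) * f₁ φ
        + (a : ℂ) ^ (lam + 1) * (Real.log a : ℂ) * f₀ φ)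
    (H : ℝ → ℂ)
    (hf₂ : ∀ a : ℝ, 0 < a → ∀ φ : 𝓢(ℝ, ℂ),
      f₂ (dilate a φ) = (a : ℂ) ^ (lam + 1) * f₂ φ + H a * f₁ φ) :
    (∀ a : ℝ, 0 < a → H a = 0) ∧ IsHomogeneous lam f₂ := by
  obtain ⟨φ₀, hφ₀⟩ : ∃ φ, f₀ φ ≠ 0 := by
    by_contra! h
    exact hf₀ne (ContinuousLinearMap.ext h)
  have hH : ∀ a : ℝ, 0 < a → H a = 0 := by
    intro a ha
    have hg := eq_zero_of_sub_mul_eq_mul_log (g := fun x ↦ H x / (x : ℂ) ^ (lam + 1)) hφ₀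
      (fun a b ha hb ↦ sub_mul_eq_mul_log_of_dilate hf₁ hf₂ ha hb φ₀) a ha
    exact (div_eq_zero_iff.1 hg).resolve_right (ofReal_cpow_ne_zero ha _)
  refine ⟨hH, fun a ha φ ↦ ?_⟩
  rw [hf₂ a ha φ, hH a ha, zero_mul, add_zero]

/-- if `f₀ ≠ 0` is homogeneous of degree `λ`, `f₁` is an associated homogeneous
distribution of degree `λ` and order 1 with component `f₀`, and `f₂` satisfies
`⟨f₂, φ(·/a)⟩ = a^(λ+1)⟨f₂, φ⟩ + H(a)⟨f₁, φ⟩` for all `a > 0`, then `H` vanishes on `(0,∞)`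
and `f₂` is homogeneous of degree `λ`. -/
theorem stmt_0 (lam : ℂ) (f₀ f₁ f₂ : 𝓢(ℝ, ℂ) →L[ℂ] ℂ)
    (hf₀ : IsHomogeneous lam f₀) (hf₀ne : f₀ ≠ 0)
    (hf₁ : ∀ a : ℝ, 0 < a → ∀ φ : 𝓢(ℝ, ℂ),
      f₁ (dilate a φ) = (a : ℂ) ^ (lam + 1) * f₁ φ
        + (a : ℂ) ^ (lam + 1) * (Real.log a : ℂ) * f₀ φ)
    (H : ℝ → ℂ)
    (hf₂ : ∀ a : ℝ, 0 < a → ∀ φ : 𝓢(ℝ, ℂ),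
      f₂ (dilate a φ) = (a : ℂ) ^ (lam + 1) * f₂ φ + H a * f₁ φ) :
    (∀ a : ℝ, 0 < a → H a = 0) ∧ IsHomogeneous lam f₂ :=
  stmt_0_general lam f₀ f₁ f₂ hf₀ne hf₁ H hf₂

end
end

section
/- Let λ ∈ ℂ, C ∈ ℂ, and let h : (0,∞) → ℂ be differentiable and satisfy h(ab) = b^λ h(a) + a^λ h(b) + C (ab)^λ (log a)(log b) for all a, b > 0. Then h(a) = h′(1) · a^λ log a + (C/2) · a^λ (log a)² for all a > 0. -/
/-!
Substituting `a = eᵗ` and dividing by `a^λ` turns the equation into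
`G (s + t) = G s + G t + C s t` for `G t = e^{-λt} h(eᵗ)`. Differentiating this in `s` at `0`
gives `G' t = G' 0 + C t`, so `G t = G' 0 t + C t² / 2`, and `G' 0 = h' 1` because `h 1 = 0`.
-/

open Complex

section QuadraticCauchy

variable {𝕜 E : Type*} [RCLike 𝕜] [NormedAddCommGroup E] [NormedSpace 𝕜 E]
  {G : 𝕜 → E} {c : E}

theorem hasDerivAt_of_map_add_eq_add_add_smul (hG : ∀ s t, G (s + t) = G s + G t + (s * t) • c)
    (hG₀ : DifferentiableAt 𝕜 G 0) (t : 𝕜) : HasDerivAt G (deriv G 0 + t • c) t := by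
  have hshift : (fun x => G t + G (x - t) + (t * (x - t)) • c) = G := by
    funext x
    rw [← hG, add_sub_cancel]
  have hlin : HasDerivAt (fun x => (t * (x - t)) • c) (t • c) t := by
    simpa using (((hasDerivAt_id t).sub_const t).const_mul t).smul_const c
  have hG₀' : HasDerivAt G (deriv G 0) (t - t) := by rw [sub_self]; exact hG₀.hasDerivAt
  have hsum := ((HasDerivAt.comp_sub_const t t hG₀').const_add (G t)).add hlin
  convert hsum using 1
  exact hshift.symm

theorem map_eq_smul_deriv_add_smul_of_map_add_eq_add_add_smul
    (hG : ∀ s t, G (s + t) = G s + G t + (s * t) • c) (hG₀ : DifferentiableAt 𝕜 G 0) (t : 𝕜) :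
    G t = t • deriv G 0 + (t ^ 2 / 2) • c := by
  set H : 𝕜 → E := fun x => G x - x • deriv G 0 - (x ^ 2 / 2) • c
  have hH : ∀ x, HasDerivAt H 0 x := by
    intro x
    have hsq : HasDerivAt (fun y : 𝕜 => y ^ 2 / 2) x x := by
      simpa using ((hasDerivAt_pow 2 x).div_const 2)
    refine (((hasDerivAt_of_map_add_eq_add_add_smul hG hG₀ x).sub
      ((hasDerivAt_id x).smul_const (deriv G 0))).sub (hsq.smul_const c)).congr_deriv ?_
    simp only [one_smul]
    abel
  have hG0 : G 0 = 0 := by simpa using hG 0 0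
  have hconst : H t = H 0 :=
    is_const_of_deriv_eq_zero (fun x => (hH x).differentiableAt) (fun x => (hH x).deriv) t 0
  simpa [H, hG0, sub_sub, sub_eq_zero] using hconst

end QuadraticCauchy

theorem ofReal_cpow_eq_exp_log_mul {a : ℝ} (ha : 0 < a) (z : ℂ) :
    (a : ℂ) ^ z = exp (Real.log a * z) := by
  rw [cpow_def_of_ne_zero (ofReal_ne_zero.mpr ha.ne'), ofReal_log ha.le]

theorem exp_neg_mul_exp (z : ℂ) : exp (-z) * exp z = 1 := by
  rw [← exp_add, neg_add_cancel, exp_zero]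

noncomputable def dampedExpComp (lam : ℂ) (h : ℝ → ℂ) (t : ℝ) : ℂ :=
  exp (-(t * lam)) * h (Real.exp t)

section DampedExpComp

variable {lam C : ℂ} {h : ℝ → ℂ}

theorem dampedExpComp_add
    (heq : ∀ a b : ℝ, 0 < a → 0 < b →
      h (a * b) = (b : ℂ) ^ lam * h a + (a : ℂ) ^ lam * h b
        + C * ((a : ℝ) * b : ℂ) ^ lam * (Real.log a : ℂ) * (Real.log b : ℂ)) (s t : ℝ) :
    dampedExpComp lam h (s + t) = dampedExpComp lam h s + dampedExpComp lam h t + (s * t) • C := by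
  have hexp : exp (-((s + t : ℝ) * lam)) = exp (-(s * lam)) * exp (-(t * lam)) := by
    rw [← exp_add]; push_cast; ring_nf
  rw [dampedExpComp, dampedExpComp, dampedExpComp, hexp, Real.exp_add,
    heq _ _ (Real.exp_pos s) (Real.exp_pos t),
    mul_cpow_ofReal_nonneg (Real.exp_pos s).le (Real.exp_pos t).le,
    ofReal_cpow_eq_exp_log_mul (Real.exp_pos s), ofReal_cpow_eq_exp_log_mul (Real.exp_pos t),
    Real.log_exp, Real.log_exp, real_smul]
  push_cast
  linear_combination (exp (-(s * lam)) * h (Real.exp s) + C * s * t) * exp_neg_mul_exp (t * lam)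
    + (exp (-(t * lam)) * h (Real.exp t) + C * s * t * exp (-(t * lam)) * exp (t * lam))
      * exp_neg_mul_exp (s * lam)

theorem hasDerivAt_dampedExpComp_zero (h_one : h 1 = 0) (hd : DifferentiableAt ℝ h 1) :
    HasDerivAt (dampedExpComp lam h) (deriv h 1) 0 := by
  have hfactor :
      HasDerivAt (fun t : ℝ => exp (-(t * lam))) (exp (-((0 : ℝ) * lam)) * -lam) 0 := by
    simpa using ((hasDerivAt_id (0 : ℝ)).ofReal_comp.mul_const lam).neg.cexp
  have hcomp : HasDerivAt (fun t => h (Real.exp t)) (Real.exp 0 • deriv h 1) 0 := by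
    refine HasDerivAt.scomp (0 : ℝ) ?_ (Real.hasDerivAt_exp 0)
    rw [Real.exp_zero]
    exact hd.hasDerivAt
  refine (hfactor.mul hcomp).congr_deriv ?_
  simp [h_one]

theorem eq_cpow_mul_dampedExpComp_log {a : ℝ} (ha : 0 < a) :
    h a = (a : ℂ) ^ lam * dampedExpComp lam h (Real.log a) := by
  rw [dampedExpComp, Real.exp_log ha, ofReal_cpow_eq_exp_log_mul ha, ← mul_assoc,
    mul_comm (exp _), exp_neg_mul_exp, one_mul]

end DampedExpComp

/-- if `h : (0,∞) → ℂ` is differentiable and satisfies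
`h(ab) = b^λ h(a) + a^λ h(b) + C (ab)^λ (log a)(log b)` for all `a, b > 0`, then
`h(a) = h′(1) a^λ log a + (C/2) a^λ (log a)²` for all `a > 0`. -/
theorem stmt_8 (lam : ℂ) (C : ℂ) (h : ℝ → ℂ)
    (hdiff : ∀ a : ℝ, 0 < a → DifferentiableAt ℝ h a)
    (heq : ∀ a b : ℝ, 0 < a → 0 < b →
      h (a * b) = (b : ℂ) ^ lam * h a + (a : ℂ) ^ lam * h b
        + C * ((a : ℝ) * b : ℂ) ^ lam * (Real.log a : ℂ) * (Real.log b : ℂ)) :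
    ∀ a : ℝ, 0 < a →
      h a = deriv h 1 * ((a : ℂ) ^ lam * (Real.log a : ℂ))
        + C / 2 * ((a : ℂ) ^ lam * (Real.log a : ℂ) ^ 2) := by
  intro a ha
  have h_one : h 1 = 0 := by simpa using heq 1 1 one_pos one_pos
  have hG₀ := hasDerivAt_dampedExpComp_zero (lam := lam) h_one (hdiff 1 one_pos)
  have hG := map_eq_smul_deriv_add_smul_of_map_add_eq_add_add_smul (dampedExpComp_add heq)
    hG₀.differentiableAt (Real.log a)
  rw [hG₀.deriv, real_smul, real_smul] at hG
  rw [eq_cpow_mul_dampedExpComp_log (h := h) (lam := lam) ha, hG]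
  push_cast
  ring
end

section
/- Let k ≥ 1 and let ψ₁, …, ψ_k : ℝ → ℂ be differentiable functions with ψ_r(0) = 0 for all r, and let C_{r,j} ∈ ℂ (for 2 ≤ r ≤ k, 1 ≤ j ≤ r−1) be constants such that ψ₁(ξ+η) = ψ₁(ξ) + ψ₁(η) for all ξ, η ∈ ℝ, and for each 2 ≤ r ≤ k: ψ_r(ξ+η) = ψ_r(ξ) + ψ_r(η) + Σ_{j=1}^{r−1} C_{r,j} ψ_{r−j}(ξ) η^j for all ξ, η ∈ ℝ. Then for each r ∈ {1,…,k} there exist constants A_{r,1}, …, A_{r,r} ∈ ℂ such that ψ_r(ξ) = Σ_{j=1}^{r} A_{r,j} ξ^j for all ξ ∈ ℝ. -/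
/-!
Differentiating `ψ_r(ξ + η) - ψ_r(η)` in `ξ` at `ξ = 0` shows that `ψ_r'(η)` is a polynomial
of degree `< r` in `η`. As `ψ_r(0) = 0`, `ψ_r` is the antiderivative of that polynomial vanishing
at `0`.
-/

open Finset

section

variable {E : Type*} [NormedAddCommGroup E] [NormedSpace ℝ E]

theorem hasDerivAt_of_add_eq_add_sum_pow_smul {f : ℝ → E} {g : ℕ → ℝ → E} {s : Finset ℕ}
    (hg : ∀ j ∈ s, DifferentiableAt ℝ (g j) 0)
    (hfg : ∀ ξ η, f (ξ + η) = f η + ∑ j ∈ s, η ^ j • g j ξ) (η : ℝ) :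
    HasDerivAt f (∑ j ∈ s, η ^ j • deriv (g j) 0) η := by
  have hshift : HasDerivAt (fun ξ => f (ξ + η)) (∑ j ∈ s, η ^ j • deriv (g j) 0) (η - η) := by
    simp_rw [sub_self, hfg]
    exact (HasDerivAt.fun_sum fun j hj => (hg j hj).hasDerivAt.const_smul (η ^ j)).const_add _
  simpa using hshift.comp_sub_const η η

theorem eq_sum_pow_succ_div_smul_of_hasDerivAt {f : ℝ → E} {s : Finset ℕ} {b : ℕ → E}
    (hf : ∀ x, HasDerivAt f (∑ j ∈ s, x ^ j • b j) x) (hf0 : f 0 = 0) (x : ℝ) :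
    f x = ∑ j ∈ s, (x ^ (j + 1) / (j + 1)) • b j := by
  set P : ℝ → E := fun x => ∑ j ∈ s, (x ^ (j + 1) / (j + 1)) • b j
  have hP : ∀ x, HasDerivAt P (∑ j ∈ s, x ^ j • b j) x := fun x => by
    refine HasDerivAt.fun_sum fun j _ => ?_
    have := ((hasDerivAt_pow (j + 1) x).div_const ((j : ℝ) + 1)).smul_const (b j)
    convert this using 2
    field_simp
    push_cast
    ring
  have hP0 : f 0 = P 0 := by simp [P, hf0]
  exact congrFun (eq_of_fderiv_eq (fun x => (hf x).differentiableAt)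
    (fun x => (hP x).differentiableAt)
    (fun x => (hf x).hasFDerivAt.fderiv.trans (hP x).hasFDerivAt.fderiv.symm) 0 hP0) x

end

theorem sum_Icc_one_eq_sum_range {M : Type*} [AddCommMonoid M] (f : ℕ → M) (n : ℕ) :
    ∑ j ∈ Icc 1 n, f j = ∑ j ∈ range n, f (j + 1) := by
  rw [range_eq_Ico, sum_Ico_add', ← Ico_add_one_right_eq_Icc, zero_add]

theorem stmt_10_general (k : ℕ) (ψ : ℕ → ℝ → ℂ) (C : ℕ → ℕ → ℂ)
    (hdiff : ∀ r, 1 ≤ r → r ≤ k → Differentiable ℝ (ψ r))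
    (hzero : ∀ r, 1 ≤ r → r ≤ k → ψ r 0 = 0)
    (h1 : ∀ ξ η : ℝ, ψ 1 (ξ + η) = ψ 1 ξ + ψ 1 η)
    (hr : ∀ r, 2 ≤ r → r ≤ k → ∀ ξ η : ℝ,
      ψ r (ξ + η) = ψ r ξ + ψ r η
        + ∑ j ∈ Finset.Icc 1 (r - 1), C r j * ψ (r - j) ξ * (η : ℂ) ^ j) :
    ∀ r, 1 ≤ r → r ≤ k → ∃ A : ℕ → ℂ, ∀ ξ : ℝ,
      ψ r ξ = ∑ j ∈ Finset.Icc 1 r, A j * (ξ : ℂ) ^ j := by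
  intro r hr1 hrk
  obtain ⟨m, rfl⟩ : ∃ m, r = m + 1 := ⟨r - 1, by omega⟩
  have hadd : ∀ ξ η : ℝ, ψ (m + 1) (ξ + η) = ψ (m + 1) ξ + ψ (m + 1) η
      + ∑ j ∈ Icc 1 m, C (m + 1) j * ψ (m + 1 - j) ξ * (η : ℂ) ^ j := by
    rcases m.eq_zero_or_pos with rfl | _
    · simpa using h1
    · simpa using hr (m + 1) (by omega) hrk
  -- `ψ_r ξ` enters as the `j = 0` term of the sum
  set g : ℕ → ℝ → ℂ := fun j => if j = 0 then ψ (m + 1) else C (m + 1) j • ψ (m + 1 - j)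
  have hg : ∀ j ∈ range (m + 1), DifferentiableAt ℝ (g j) 0 := by
    intro j hj
    rw [mem_range] at hj
    by_cases hj0 : j = 0
    · simpa [g, hj0] using hdiff (m + 1) hr1 hrk 0
    · simpa [g, hj0] using ((hdiff (m + 1 - j) (by omega) (by omega)).const_smul (C (m + 1) j)) 0
  have hfg : ∀ ξ η : ℝ,
      ψ (m + 1) (ξ + η) = ψ (m + 1) η + ∑ j ∈ range (m + 1), η ^ j • g j ξ := by
    intro ξ η
    have hterm : ∀ i, C (m + 1) (i + 1) * ψ (m + 1 - (i + 1)) ξ * (η : ℂ) ^ (i + 1)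
        = η ^ (i + 1) • g (i + 1) ξ := fun i => by
      simp only [g, Nat.add_one_ne_zero, if_false, Nat.add_sub_add_right, Pi.smul_apply,
        smul_eq_mul, Complex.real_smul, Complex.ofReal_pow]
      ring
    rw [hadd, sum_Icc_one_eq_sum_range, sum_congr rfl fun i _ => hterm i, sum_range_succ']
    simp only [g, pow_zero, one_smul, if_pos]
    abel
  have hpoly := eq_sum_pow_succ_div_smul_of_hasDerivAt
    (hasDerivAt_of_add_eq_add_sum_pow_smul hg hfg) (hzero (m + 1) hr1 hrk)
  refine ⟨fun j => deriv (g (j - 1)) 0 / j, fun ξ => ?_⟩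
  rw [hpoly, sum_Icc_one_eq_sum_range]
  refine sum_congr rfl fun j _ => ?_
  simp only [Complex.real_smul, Nat.add_sub_cancel]
  push_cast
  ring

/-- if `ψ₁, …, ψ_k : ℝ → ℂ` are differentiable, vanish at `0`, `ψ₁` is
additive and `ψ_r(ξ+η) = ψ_r(ξ) + ψ_r(η) + ∑_{j=1}^{r−1} C_{r,j} ψ_{r−j}(ξ) η^j`
for `2 ≤ r ≤ k`, then each `ψ_r` is a polynomial `∑_{j=1}^{r} A_{r,j} ξ^j`. -/
theorem stmt_10 (k : ℕ) (hk : 1 ≤ k) (ψ : ℕ → ℝ → ℂ) (C : ℕ → ℕ → ℂ)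
    (hdiff : ∀ r, 1 ≤ r → r ≤ k → Differentiable ℝ (ψ r))
    (hzero : ∀ r, 1 ≤ r → r ≤ k → ψ r 0 = 0)
    (h1 : ∀ ξ η : ℝ, ψ 1 (ξ + η) = ψ 1 ξ + ψ 1 η)
    (hr : ∀ r, 2 ≤ r → r ≤ k → ∀ ξ η : ℝ,
      ψ r (ξ + η) = ψ r ξ + ψ r η
        + ∑ j ∈ Finset.Icc 1 (r - 1), C r j * ψ (r - j) ξ * (η : ℂ) ^ j) :
    ∀ r, 1 ≤ r → r ≤ k → ∃ A : ℕ → ℂ, ∀ ξ : ℝ,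
      ψ r ξ = ∑ j ∈ Finset.Icc 1 r, A j * (ξ : ℂ) ^ j :=
  stmt_10_general k ψ C hdiff hzero h1 hr
end

section
/- Let λ ∈ ℂ, k ≥ 1, and let h₁, …, h_k : (0,∞) → ℂ be differentiable functions and C_{r,j} ∈ ℂ (for 2 ≤ r ≤ k, 1 ≤ j ≤ r−1) constants such that for all a, b > 0: h₁(ab) = a^λ h₁(b) + b^λ h₁(a), and for each 2 ≤ r ≤ k: h_r(ab) = a^λ h_r(b) + b^λ h_r(a) + Σ_{j=1}^{r−1} C_{r,j} h_{r−j}(a) b^λ (log b)^j. Then for each r ∈ {1,…,k} there exist constants A_{r,1}, …, A_{r,r} ∈ ℂ such that h_r(a) = a^λ Σ_{j=1}^{r} A_{r,j} (log a)^j for all a > 0. -/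
/-!
With `a = exp x` and `g_r x = exp (-λ x) * h_r (exp x)` the hypotheses become
`g_r (x + y) = g_r x + g_r y + ∑_j C_{r,j} g_{r-j} x * y ^ j`. Differentiating in `y` at `y = 0`
gives `g_r' = g_r' 0 + C_{r,1} g_{r-1}` on all of `ℝ` (differentiability of `g_r` at `0` suffices),
and `x = y = 0` gives `g_r 0 = 0`; so by induction on `r` each `g_r` is a polynomial of degree
at most `r` without constant term.
-/

open Finset

theorem sum_Icc_one_mul_zero_pow {M : Type*} [Semiring M] (m : ℕ) (d : ℕ → M) :
    ∑ j ∈ Icc 1 m, d j * (0 : M) ^ j = 0 :=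
  sum_eq_zero fun j hj => by rw [zero_pow (by grind), mul_zero]

theorem sum_Icc_one_succ {M : Type*} [AddCommMonoid M] (n : ℕ) (u : ℕ → M) :
    ∑ j ∈ Icc 1 (n + 1), u j = u 1 + ∑ j ∈ Icc 1 n, u (j + 1) := by
  induction n with
  | zero => simp
  | succ n ih => rw [sum_Icc_succ_top (by omega), ih, sum_Icc_succ_top (by omega), add_assoc]

theorem hasDerivAt_sum_Icc_pow (m : ℕ) (d : ℕ → ℂ) (x : ℝ) :
    HasDerivAt (fun y : ℝ => ∑ j ∈ Icc 1 m, d j * (y : ℂ) ^ j)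
      (∑ j ∈ Icc 1 m, d j * (j * (x : ℂ) ^ (j - 1))) x :=
  HasDerivAt.fun_sum fun j _ => ((hasDerivAt_pow j (x : ℂ)).comp_ofReal).const_mul (d j)

theorem hasDerivAt_zero_sum_Icc_pow {m : ℕ} (hm : 1 ≤ m) (d : ℕ → ℂ) :
    HasDerivAt (fun y : ℝ => ∑ j ∈ Icc 1 m, d j * (y : ℂ) ^ j) (d 1) 0 := by
  convert hasDerivAt_sum_Icc_pow m d 0 using 1
  rw [sum_eq_single 1 (fun j hj hj1 => by
    rw [Complex.ofReal_zero, zero_pow (by grind), mul_zero, mul_zero])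
    (by simp [hm])]
  simp

theorem exists_eq_sum_Icc_pow_of_hasDerivAt {f : ℝ → ℂ} (hf0 : f 0 = 0) {n : ℕ} (c : ℂ)
    (A : ℕ → ℂ) (hf : ∀ x : ℝ, HasDerivAt f (c + ∑ j ∈ Icc 1 n, A j * (x : ℂ) ^ j) x) :
    ∃ B : ℕ → ℂ, ∀ x, f x = ∑ j ∈ Icc 1 (n + 1), B j * (x : ℂ) ^ j := by
  set B : ℕ → ℂ := fun j => if j = 1 then c else A (j - 1) / j
  set F : ℝ → ℂ := fun x => ∑ j ∈ Icc 1 (n + 1), B j * (x : ℂ) ^ j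
  have hF : ∀ x : ℝ, HasDerivAt F (c + ∑ j ∈ Icc 1 n, A j * (x : ℂ) ^ j) x := by
    intro x
    convert hasDerivAt_sum_Icc_pow (n + 1) B x using 1
    rw [sum_Icc_one_succ]
    congr 1
    · simp [B]
    · refine sum_congr rfl fun j hj => ?_
      have : (j + 1 : ℂ) ≠ 0 := by exact_mod_cast j.succ_ne_zero
      have hj1 : j + 1 ≠ 1 := by grind
      simp only [B, hj1, if_false, Nat.add_sub_cancel]
      push_cast
      field_simp
  have hdiff : ∀ x, HasDerivAt (fun y => f y - F y) 0 x := fun x => by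
    simpa using (hf x).fun_sub (hF x)
  refine ⟨B, fun x => ?_⟩
  have := is_const_of_deriv_eq_zero (fun y => (hdiff y).differentiableAt)
    (fun y => (hdiff y).deriv) x 0
  simp only [hf0, F, Complex.ofReal_zero, sum_Icc_one_mul_zero_pow, sub_zero] at this
  exact sub_eq_zero.1 this

theorem hasDerivAt_of_add_eq_add_add {g P : ℝ → ℂ} {g' p : ℂ} (hg : HasDerivAt g g' 0)
    (hP : HasDerivAt P p 0) {x : ℝ} (hfe : ∀ y, g (x + y) = g x + g y + P y) :
    HasDerivAt g (g' + p) x := by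
  have hshift : HasDerivAt (fun y => g (x + y)) (g' + p) (x - x) := by
    rw [sub_self, funext hfe]
    exact (hg.const_add (g x)).add hP
  simpa using hshift.comp_sub_const x x

theorem exists_eq_sum_Icc_pow_of_add_eq {k : ℕ} {g : ℕ → ℝ → ℂ} {C : ℕ → ℕ → ℂ}
    (hdiff : ∀ r, 1 ≤ r → r ≤ k → DifferentiableAt ℝ (g r) 0)
    (hfe : ∀ r, 1 ≤ r → r ≤ k → ∀ x y : ℝ,
      g r (x + y) = g r x + g r y + ∑ j ∈ Icc 1 (r - 1), C r j * g (r - j) x * (y : ℂ) ^ j) :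
    ∀ r, 1 ≤ r → r ≤ k → ∃ A : ℕ → ℂ, ∀ x : ℝ, g r x = ∑ j ∈ Icc 1 r, A j * (x : ℂ) ^ j := by
  have hzero : ∀ r, 1 ≤ r → r ≤ k → g r 0 = 0 := fun r hr1 hrk => by
    simpa [sum_Icc_one_mul_zero_pow] using hfe r hr1 hrk 0 0
  intro r hr1
  induction r, hr1 using Nat.le_induction with
  | base =>
    intro hk1
    refine exists_eq_sum_Icc_pow_of_hasDerivAt (n := 0) (hzero 1 le_rfl hk1) (deriv (g 1) 0) 0
      fun x => ?_
    simpa using hasDerivAt_of_add_eq_add_add (hdiff 1 le_rfl hk1).hasDerivAt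
      (hasDerivAt_const 0 0) (by simpa using hfe 1 le_rfl hk1 x)
  | succ n hn ih =>
    intro hnk
    obtain ⟨A, hA⟩ := ih (by omega)
    refine exists_eq_sum_Icc_pow_of_hasDerivAt (hzero _ (by omega) hnk) (deriv (g (n + 1)) 0)
      (fun j => C (n + 1) 1 * A j) fun x => ?_
    have := hasDerivAt_of_add_eq_add_add (hdiff _ (by omega) hnk).hasDerivAt
      (hasDerivAt_zero_sum_Icc_pow hn fun j => C (n + 1) j * g (n + 1 - j) x)
      (hfe (n + 1) (by omega) hnk x)
    simpa [hA, mul_sum, mul_assoc] using this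

theorem ofReal_exp_cpow (x : ℝ) (lam : ℂ) :
    ((Real.exp x : ℝ) : ℂ) ^ lam = Complex.exp (lam * x) := by
  rw [Complex.cpow_def_of_ne_zero (by exact_mod_cast (Real.exp_pos x).ne'),
    ← Complex.ofReal_log (Real.exp_pos x).le, Real.log_exp, mul_comm]

/-- `a ↦ a ^ (-λ) * f a`, read in the coordinate `x = log a`. -/
noncomputable def logTwist (lam : ℂ) (f : ℝ → ℂ) (x : ℝ) : ℂ :=
  Complex.exp (-(lam * x)) * f (Real.exp x)

theorem eq_cpow_mul_logTwist (lam : ℂ) (f : ℝ → ℂ) {a : ℝ} (ha : 0 < a) :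
    f a = (a : ℂ) ^ lam * logTwist lam f (Real.log a) := by
  obtain ⟨x, rfl⟩ : ∃ x, Real.exp x = a := ⟨_, Real.exp_log ha⟩
  rw [logTwist, Real.log_exp, ofReal_exp_cpow, ← mul_assoc, ← Complex.exp_add, add_neg_cancel,
    Complex.exp_zero, one_mul]

theorem DifferentiableAt.logTwist {lam : ℂ} {f : ℝ → ℂ} {x : ℝ}
    (hf : DifferentiableAt ℝ f (Real.exp x)) : DifferentiableAt ℝ (logTwist lam f) x := by
  unfold _root_.logTwist
  fun_prop

theorem logTwist_add {lam : ℂ} {f : ℝ → ℂ} {F : ℕ → ℝ → ℂ} {c : ℕ → ℂ} {m : ℕ}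
    (hfe : ∀ a b : ℝ, 0 < a → 0 < b → f (a * b) = (a : ℂ) ^ lam * f b + (b : ℂ) ^ lam * f a
      + ∑ j ∈ Icc 1 m, c j * F j a * (b : ℂ) ^ lam * (Real.log b : ℂ) ^ j) (x y : ℝ) :
    logTwist lam f (x + y) = logTwist lam f x + logTwist lam f y
      + ∑ j ∈ Icc 1 m, c j * logTwist lam (F j) x * (y : ℂ) ^ j := by
  simp only [logTwist, Real.exp_add, hfe _ _ (Real.exp_pos x) (Real.exp_pos y), ofReal_exp_cpow,
    Real.log_exp, Complex.ofReal_add, mul_add, neg_add, Complex.exp_add, Complex.exp_neg, mul_sum]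
  field_simp
  ring

theorem stmt_11_general (lam : ℂ) (k : ℕ) (h : ℕ → ℝ → ℂ) (C : ℕ → ℕ → ℂ)
    (hdiff : ∀ r, 1 ≤ r → r ≤ k → ∀ a : ℝ, 0 < a → DifferentiableAt ℝ (h r) a)
    (h1 : ∀ a b : ℝ, 0 < a → 0 < b →
      h 1 (a * b) = (a : ℂ) ^ lam * h 1 b + (b : ℂ) ^ lam * h 1 a)
    (hr : ∀ r, 2 ≤ r → r ≤ k → ∀ a b : ℝ, 0 < a → 0 < b →
      h r (a * b) = (a : ℂ) ^ lam * h r b + (b : ℂ) ^ lam * h r a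
        + ∑ j ∈ Finset.Icc 1 (r - 1),
            C r j * h (r - j) a * (b : ℂ) ^ lam * (Real.log b : ℂ) ^ j) :
    ∀ r, 1 ≤ r → r ≤ k → ∃ A : ℕ → ℂ, ∀ a : ℝ, 0 < a →
      h r a = (a : ℂ) ^ lam * ∑ j ∈ Finset.Icc 1 r, A j * (Real.log a : ℂ) ^ j := by
  have hdiff0 : ∀ r, 1 ≤ r → r ≤ k → DifferentiableAt ℝ (logTwist lam (h r)) 0 :=
    fun r hr1 hrk => DifferentiableAt.logTwist <| by
      simpa using hdiff r hr1 hrk 1 one_pos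
  have hfe : ∀ r, 1 ≤ r → r ≤ k → ∀ x y : ℝ, logTwist lam (h r) (x + y) =
      logTwist lam (h r) x + logTwist lam (h r) y
        + ∑ j ∈ Icc 1 (r - 1), C r j * logTwist lam (h (r - j)) x * (y : ℂ) ^ j := by
    intro r hr1 hrk
    rcases hr1.eq_or_lt with rfl | hr2
    · exact logTwist_add (m := 0) (by simpa using h1)
    · exact logTwist_add (hr r hr2 hrk)
  intro r hr1 hrk
  obtain ⟨A, hA⟩ := exists_eq_sum_Icc_pow_of_add_eq hdiff0 hfe r hr1 hrk
  exact ⟨A, fun a ha => by rw [eq_cpow_mul_logTwist lam (h r) ha, hA]⟩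

/-- if `h₁, …, h_k : (0,∞) → ℂ` are differentiable,
`h₁(ab) = a^λ h₁(b) + b^λ h₁(a)`, and for `2 ≤ r ≤ k`
`h_r(ab) = a^λ h_r(b) + b^λ h_r(a) + ∑_{j=1}^{r−1} C_{r,j} h_{r−j}(a) b^λ (log b)^j`,
then each `h_r(a) = a^λ ∑_{j=1}^{r} A_{r,j} (log a)^j` on `(0,∞)`. -/
theorem stmt_11 (lam : ℂ) (k : ℕ) (hk : 1 ≤ k) (h : ℕ → ℝ → ℂ) (C : ℕ → ℕ → ℂ)
    (hdiff : ∀ r, 1 ≤ r → r ≤ k → ∀ a : ℝ, 0 < a → DifferentiableAt ℝ (h r) a)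
    (h1 : ∀ a b : ℝ, 0 < a → 0 < b →
      h 1 (a * b) = (a : ℂ) ^ lam * h 1 b + (b : ℂ) ^ lam * h 1 a)
    (hr : ∀ r, 2 ≤ r → r ≤ k → ∀ a b : ℝ, 0 < a → 0 < b →
      h r (a * b) = (a : ℂ) ^ lam * h r b + (b : ℂ) ^ lam * h r a
        + ∑ j ∈ Finset.Icc 1 (r - 1),
            C r j * h (r - j) a * (b : ℂ) ^ lam * (Real.log b : ℂ) ^ j) :
    ∀ r, 1 ≤ r → r ≤ k → ∃ A : ℕ → ℂ, ∀ a : ℝ, 0 < a →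
      h r a = (a : ℂ) ^ lam * ∑ j ∈ Finset.Icc 1 r, A j * (Real.log a : ℂ) ^ j :=
  stmt_11_general lam k h C hdiff h1 hr
end
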